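/- If α and β are related positive rationals, then α is related to α ∗ β, and the length of α ∗ β equals max(|α|, |β|) + 1. -/
import Mathlib


namespace ResolutionGraph

/-- The value of the continued fraction `[a₁, …, aₙ] = a₁ + 1/[a₂, …, aₙ]`. -/
def cfVal : List ℕ → ℚ
  | [] => 0
  | [a] => (a : ℚ)
  | a :: b :: rest => (a : ℚ) + 1 / cfVal (b :: rest)

/-- `L = (a₁, …, aₙ)` is a continued fraction expansion of `q`:
`n ≥ 1`, `a₁ ≥ 0`, `a₂, …, aₙ ≥ 1` and `[a₁, …, aₙ] = q`. -/
def IsExpansion (L : List ℕ) (q : ℚ) : Prop :=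
  L ≠ [] ∧ (∀ x ∈ L.tail, 1 ≤ x) ∧ cfVal L = q

/-- `q` has length `m`, i.e. some expansion `(a₁, …, aₙ)` of `q` satisfies `a₁ + ⋯ + aₙ = m`. -/
def HasLen (q : ℚ) (m : ℕ) : Prop :=
  ∃ L : List ℕ, IsExpansion L q ∧ L.sum = m

/-- `α ∼ β` : one of them has an expansion `[a₁, …, a_k]` and the other equals
`[a₁, …, a_k, n]` for some integer `n ≥ 1`. -/
def Related (α β : ℚ) : Prop :=
  (∃ (L : List ℕ) (n : ℕ), 1 ≤ n ∧ IsExpansion L α ∧ cfVal (L ++ [n]) = β) ∨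
  (∃ (L : List ℕ) (n : ℕ), 1 ≤ n ∧ IsExpansion L β ∧ cfVal (L ++ [n]) = α)

/-- `γ` is the value of the convolution `α ∗ β`, computed from a witness of `α ∼ β`:
for an expansion `[a₁, …, a_k]` of one of them with the other equal to `[a₁, …, a_k, n]`
(`n ≥ 1` an integer), `γ = [a₁, …, a_k, n + 1]`. -/
def ConvWitness (α β γ : ℚ) : Prop :=
  ∃ (L : List ℕ) (n : ℕ), 1 ≤ n ∧
    ((IsExpansion L α ∧ cfVal (L ++ [n]) = β) ∨ (IsExpansion L β ∧ cfVal (L ++ [n]) = α)) ∧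
    cfVal (L ++ [n + 1]) = γ

/-- `α ≺ β` : `β` has an expansion `[a₁, …, a_k]` and `α = [a₁, …, a_ℓ, b]` for some
`0 ≤ ℓ ≤ k − 1` and `1 ≤ b ≤ a_{ℓ+1}`. -/
def Precedes (α β : ℚ) : Prop :=
  ∃ L : List ℕ, IsExpansion L β ∧ ∃ ℓ : ℕ, ∃ h : ℓ < L.length, ∃ b : ℕ,
    1 ≤ b ∧ b ≤ L.get ⟨ℓ, h⟩ ∧ cfVal (L.take ℓ ++ [b]) = α

/-- `α` immediately precedes `β` : `α ≺ β` and `|β| = |α| + 1`. -/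
def ImmediatelyPrecedes (α β : ℚ) : Prop :=
  Precedes α β ∧ ∃ a : ℕ, HasLen α a ∧ HasLen β (a + 1)

lemma cfVal_cons (a : ℕ) (X : List ℕ) (h : X ≠ []) :
    cfVal (a :: X) = (a : ℚ) + 1 / cfVal X := by
  cases X with
  | nil => exact absurd rfl h
  | cons b rest => rfl

lemma one_le_cfVal : ∀ L : List ℕ, L ≠ [] → (∀ x ∈ L, 1 ≤ x) → 1 ≤ cfVal L
  | [], h, _ => absurd rfl h
  | [a], _, h => by
      have := h a (by simp)
      simp only [cfVal]
      exact_mod_cast this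
  | a :: b :: rest, _, h => by
      have ih := one_le_cfVal (b :: rest) (by simp)
        (fun x hx => h x (List.mem_cons_of_mem _ hx))
      have ha : (1:ℚ) ≤ (a:ℚ) := by exact_mod_cast h a (by simp)
      have hpos : 0 < cfVal (b :: rest) := lt_of_lt_of_le one_pos ih
      have : 0 < 1 / cfVal (b :: rest) := by positivity
      simp only [cfVal]
      linarith

lemma sum_eq_of_cfVal_eq : ∀ k (L M : List ℕ), L.length + M.length ≤ k →
    L ≠ [] → M ≠ [] → (∀ x ∈ L.tail, 1 ≤ x) → (∀ x ∈ M.tail, 1 ≤ x) →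
    cfVal L = cfVal M → L.sum = M.sum := by
  intro k
  induction k with
  | zero =>
    intro L M hlen hL hM
    cases L with
    | nil => exact absurd rfl hL
    | cons a t => simp at hlen
  | succ k ih =>
    intro L M hlen hL hM hLt hMt hval
    match L, M with
    | [a], [b] =>
      simp only [cfVal] at hval
      have : a = b := by exact_mod_cast hval
      simp [this]
    | [a], b :: c :: rest =>
      have hM1 : ∀ x ∈ c :: rest, 1 ≤ x := by
        intro x hx; exact hMt x (by simpa using hx)
      have hv : 1 ≤ cfVal (c :: rest) := one_le_cfVal _ (by simp) hM1
      have hvpos : 0 < cfVal (c :: rest) := lt_of_lt_of_le one_pos hv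
      rw [cfVal_cons b (c :: rest) (by simp)] at hval
      simp only [cfVal] at hval
      -- (a:ℚ) = b + 1/v,  0 < 1/v ≤ 1
      have h1 : 1 / cfVal (c :: rest) ≤ 1 := by
        rw [div_le_one hvpos]; exact hv
      have h2 : 0 < 1 / cfVal (c :: rest) := by positivity
      have hab : a = b + 1 := by
        have hlt : (b:ℚ) < a := by linarith
        have hle : (a:ℚ) ≤ b + 1 := by linarith
        have h1' : b < a := by exact_mod_cast hlt
        have h2' : a ≤ b + 1 := by exact_mod_cast hle
        omega
      have hv1 : cfVal (c :: rest) = 1 := by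
        have : 1 / cfVal (c :: rest) = 1 := by
          rw [hab] at hval; push_cast at hval; linarith
        field_simp at this
        linarith
      have hsum : (c :: rest).sum = ([1] : List ℕ).sum := by
        apply ih (c :: rest) [1]
        · simp at hlen ⊢; omega
        · simp
        · simp
        · intro x hx; exact hM1 x (List.mem_cons_of_mem _ hx)
        · simp
        · rw [hv1]; simp [cfVal]
      simp at hsum
      simp [hab, hsum]
    | b :: c :: rest, [a] =>
      have hM1 : ∀ x ∈ c :: rest, 1 ≤ x := by
        intro x hx; exact hLt x (by simpa using hx)
      have hv : 1 ≤ cfVal (c :: rest) := one_le_cfVal _ (by simp) hM1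
      have hvpos : 0 < cfVal (c :: rest) := lt_of_lt_of_le one_pos hv
      rw [cfVal_cons b (c :: rest) (by simp)] at hval
      simp only [cfVal] at hval
      have h1 : 1 / cfVal (c :: rest) ≤ 1 := by
        rw [div_le_one hvpos]; exact hv
      have h2 : 0 < 1 / cfVal (c :: rest) := by positivity
      have hab : a = b + 1 := by
        have hlt : (b:ℚ) < a := by linarith
        have hle : (a:ℚ) ≤ b + 1 := by linarith
        have h1' : b < a := by exact_mod_cast hlt
        have h2' : a ≤ b + 1 := by exact_mod_cast hle
        omega
      have hv1 : cfVal (c :: rest) = 1 := by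
        have : 1 / cfVal (c :: rest) = 1 := by
          rw [hab] at hval; push_cast at hval; linarith
        field_simp at this
        linarith
      have hsum : (c :: rest).sum = ([1] : List ℕ).sum := by
        apply ih (c :: rest) [1]
        · simp at hlen ⊢; omega
        · simp
        · simp
        · intro x hx; exact hM1 x (List.mem_cons_of_mem _ hx)
        · simp
        · rw [hv1]; simp [cfVal]
      simp at hsum
      simp [hab, hsum]
    | a :: c :: r, b :: d :: s =>
      have hL1 : ∀ x ∈ c :: r, 1 ≤ x := by
        intro x hx; exact hLt x (by simpa using hx)
      have hM1 : ∀ x ∈ d :: s, 1 ≤ x := by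
        intro x hx; exact hMt x (by simpa using hx)
      have hu : 1 ≤ cfVal (c :: r) := one_le_cfVal _ (by simp) hL1
      have hv : 1 ≤ cfVal (d :: s) := one_le_cfVal _ (by simp) hM1
      have hupos : 0 < cfVal (c :: r) := lt_of_lt_of_le one_pos hu
      have hvpos : 0 < cfVal (d :: s) := lt_of_lt_of_le one_pos hv
      simp only [cfVal] at hval
      have h1u : 1 / cfVal (c :: r) ≤ 1 := by rw [div_le_one hupos]; exact hu
      have h2u : 0 < 1 / cfVal (c :: r) := by positivity
      have h1v : 1 / cfVal (d :: s) ≤ 1 := by rw [div_le_one hvpos]; exact hv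
      have h2v : 0 < 1 / cfVal (d :: s) := by positivity
      have hab : a = b := by
        have hlt : (a:ℚ) < b + 1 := by linarith
        have hlt' : (b:ℚ) < a + 1 := by linarith
        have h1' : a < b + 1 := by exact_mod_cast hlt
        have h2' : b < a + 1 := by exact_mod_cast hlt'
        omega
      have huv : cfVal (c :: r) = cfVal (d :: s) := by
        subst hab
        have : 1 / cfVal (c :: r) = 1 / cfVal (d :: s) := by linarith
        field_simp at this
        linarith
      have hsum := ih (c :: r) (d :: s) (by simp at hlen ⊢; omega) (by simp) (by simp)
        (fun x hx => hL1 x (List.mem_cons_of_mem _ hx))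
        (fun x hx => hM1 x (List.mem_cons_of_mem _ hx)) huv
      simp [hab, hsum]

lemma hasLen_unique {q : ℚ} {a b : ℕ} (ha : HasLen q a) (hb : HasLen q b) : a = b := by
  obtain ⟨L, ⟨hL, hLt, hLv⟩, hLs⟩ := ha
  obtain ⟨M, ⟨hM, hMt, hMv⟩, hMs⟩ := hb
  subst hLs hMs
  exact sum_eq_of_cfVal_eq (L.length + M.length) L M le_rfl hL hM hLt hMt (hLv.trans hMv.symm)

lemma isExpansion_append {L : List ℕ} {q : ℚ} (h : IsExpansion L q) {n : ℕ} (hn : 1 ≤ n) :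
    IsExpansion (L ++ [n]) (cfVal (L ++ [n])) := by
  obtain ⟨hL, hLt, -⟩ := h
  refine ⟨by simp, ?_, rfl⟩
  cases L with
  | nil => exact absurd rfl hL
  | cons a t =>
    intro x hx
    simp only [List.cons_append, List.tail_cons, List.mem_append, List.mem_singleton] at hx
    rcases hx with hx | rfl
    · exact hLt x hx
    · exact hn

lemma cfVal_snoc_one : ∀ (L : List ℕ) (n : ℕ), cfVal (L ++ [n, 1]) = cfVal (L ++ [n + 1])
  | [], n => by
      simp only [List.nil_append]
      rw [cfVal_cons n [1] (by simp)]
      simp [cfVal]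
  | a :: rest, n => by
      have ih := cfVal_snoc_one rest n
      rw [List.cons_append, List.cons_append,
        cfVal_cons a (rest ++ [n, 1]) (by simp),
        cfVal_cons a (rest ++ [n + 1]) (by simp), ih]

/-- If `α` and `β` are related positive rationals, then `α` is related to
`α ∗ β`, and the length of `α ∗ β` equals `max (|α|, |β|) + 1`. (Here `γ = α ∗ β` is expressed
via a convolution witness.) -/
theorem related_conv_and_length (α β γ : ℚ) (hα : 0 < α) (hβ : 0 < β)
    (h : ConvWitness α β γ) :
    Related α γ ∧
      ∀ a b : ℕ, HasLen α a → HasLen β b → HasLen γ (max a b + 1) := by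
  obtain ⟨L, n, hn, hcase, hγ⟩ := h
  constructor
  · rcases hcase with ⟨hexp, hβ'⟩ | ⟨hexp, hα'⟩
    · exact Or.inl ⟨L, n + 1, by omega, hexp, hγ⟩
    · refine Or.inl ⟨L ++ [n], 1, le_rfl, ?_, ?_⟩
      · have hx := isExpansion_append hexp hn
        exact ⟨hx.1, hx.2.1, hα'⟩
      · rw [List.append_assoc]
        show cfVal (L ++ [n, 1]) = γ
        rw [cfVal_snoc_one]; exact hγ
  · intro a b ha hb
    rcases hcase with ⟨hexp, hβ'⟩ | ⟨hexp, hα'⟩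
    · have hB : IsExpansion (L ++ [n]) β := by
        have hx := isExpansion_append hexp hn; exact ⟨hx.1, hx.2.1, hβ'⟩
      have hG : IsExpansion (L ++ [n + 1]) γ := by
        have hx := isExpansion_append hexp (by omega : 1 ≤ n + 1)
        exact ⟨hx.1, hx.2.1, hγ⟩
      have ha' : a = L.sum := hasLen_unique ha ⟨L, hexp, rfl⟩
      have hb' : b = L.sum + n := hasLen_unique hb ⟨L ++ [n], hB, by simp⟩
      refine ⟨L ++ [n + 1], hG, ?_⟩
      simp
      omega
    · have hA : IsExpansion (L ++ [n]) α := by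
        have hx := isExpansion_append hexp hn; exact ⟨hx.1, hx.2.1, hα'⟩
      have hG : IsExpansion (L ++ [n + 1]) γ := by
        have hx := isExpansion_append hexp (by omega : 1 ≤ n + 1)
        exact ⟨hx.1, hx.2.1, hγ⟩
      have ha' : a = L.sum + n := hasLen_unique ha ⟨L ++ [n], hA, by simp⟩
      have hb' : b = L.sum := hasLen_unique hb ⟨L, hexp, rfl⟩
      refine ⟨L ++ [n + 1], hG, ?_⟩
      simp
      omega

end ResolutionGraph
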